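/- Let W be a finite group acting by automorphisms on a multiplicative abelian group T, and let Z be a W-stable subgroup of T such that there exist a finite W-set S and a W-equivariant group isomorphism from T/Z onto the permutation module S → ℂˣ. Let t₀ ∈ T satisfy (σ·t₀)·t₀⁻¹ ∈ Z for all σ ∈ W. Then there exists z₀ ∈ Z such that σ·(z₀·t₀) = z₀·t₀ for all σ ∈ W. (This is the cohomological content of Corollary 6.5 of the paper: an element t₀ ∈ T̂ with t₀^σ/t₀ ∈ Ẑ for all σ ∈ W_F can be modified by a central element z₀ ∈ Ẑ so that z₀t₀ is fixed by W_F.) -/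

import Mathlib

/-!
The class of `t₀` in `T ⧸ Z` is `W`-fixed, i.e. a `W`-invariant function `S → ℂˣ`.
Since `ℂˣ` is divisible, taking `|W|`-th roots pointwise gives an invariant `y` with
`y ^ |W| = [t₀]`. For any lift `g` of `y` the norm `∏ τ, τ • g` is `W`-fixed in `T` and has
class `y ^ |W| = [t₀]`, so it differs from `t₀` by an element of `Z`.
-/

lemma IsAlgClosed.exists_units_pow_eq {k : Type*} [Field k] [IsAlgClosed k] {n : ℕ}
    (hn : n ≠ 0) (u : kˣ) : ∃ v : kˣ, v ^ n = u := by
  obtain ⟨c, hc⟩ := IsAlgClosed.exists_pow_nat_eq (u : k) (Nat.pos_of_ne_zero hn)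
  have hc0 : c ≠ 0 := by
    rintro rfl
    exact u.ne_zero (by rw [← hc, zero_pow hn])
  exact ⟨Units.mk0 c hc0, Units.ext (by simpa using hc)⟩

/-- Pointwise roots of an invariant function, chosen as a function of the value, stay invariant. -/
lemma exists_invariant_pow_eq {ι S M : Type*} [Monoid M] {n : ℕ}
    (hroot : ∀ m : M, ∃ v : M, v ^ n = m) (π : ι → S → S) (f : S → M)
    (hf : ∀ i s, f (π i s) = f s) :
    ∃ g : S → M, (∀ i s, g (π i s) = g s) ∧ g ^ n = f := by
  choose r hr using hroot
  exact ⟨r ∘ f, fun i s => congrArg r (hf i s), funext fun s => hr (f s)⟩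

section ActionNorm

variable {W T : Type*} [Group W] [Fintype W] [CommGroup T] (φ : W →* MulAut T)

def actionNorm (g : T) : T := ∏ τ : W, φ τ g

lemma actionNorm_fixed (g : T) (σ : W) : φ σ (actionNorm φ g) = actionNorm φ g := by
  simp only [actionNorm, map_prod, ← MulAut.mul_apply, ← map_mul]
  exact Equiv.prod_comp (Equiv.mulLeft σ) (fun τ => φ τ g)

lemma mk_actionNorm (Z : Subgroup T) {g : T}
    (hg : ∀ σ : W, (φ σ g : T ⧸ Z) = g) :
    ((actionNorm φ g : T) : T ⧸ Z) = (g : T ⧸ Z) ^ Fintype.card W := by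
  rw [actionNorm, QuotientGroup.mk_prod, Finset.prod_congr rfl fun σ _ => hg σ,
    Finset.prod_const, Finset.card_univ]

lemma exists_mem_mul_fixed_of_mk_eq_pow (Z : Subgroup T) {g t₀ : T}
    (hg : ∀ σ : W, (φ σ g : T ⧸ Z) = g)
    (hgt : (g : T ⧸ Z) ^ Fintype.card W = t₀) :
    ∃ z₀ ∈ Z, ∀ σ : W, φ σ (z₀ * t₀) = z₀ * t₀ := by
  refine ⟨actionNorm φ g * t₀⁻¹, ?_, fun σ => ?_⟩
  · rw [← QuotientGroup.eq_one_iff, QuotientGroup.mk_mul, QuotientGroup.mk_inv,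
      mk_actionNorm φ Z hg, hgt, mul_inv_cancel]
  · rw [inv_mul_cancel_right, actionNorm_fixed]

end ActionNorm

theorem exists_central_modification_fixed_general
    {W T : Type*} [Group W] [Finite W] [CommGroup T]
    (φ : W →* MulAut T) (Z : Subgroup T)
    (hperm : ∃ (S : Type) (_ : Fintype S) (ρ : W →* Equiv.Perm S)
        (ψ : (T ⧸ Z) ≃* (S → ℂˣ)),
        ∀ (σ : W) (t : T) (s : S),
          ψ (QuotientGroup.mk (φ σ t)) s = ψ (QuotientGroup.mk t) ((ρ σ)⁻¹ s))
    (t₀ : T) (ht₀ : ∀ σ : W, φ σ t₀ * t₀⁻¹ ∈ Z) :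
    ∃ z₀ ∈ Z, ∀ σ : W, φ σ (z₀ * t₀) = z₀ * t₀ := by
  obtain ⟨S, _, ρ, ψ, hψ⟩ := hperm
  have := Fintype.ofFinite W
  have ht₀_inv : ∀ σ s, ψ t₀ ((ρ σ)⁻¹ s) = ψ t₀ s := fun σ s => by
    rw [← hψ, QuotientGroup.eq_iff_div_mem.mpr (by rw [div_eq_mul_inv]; exact ht₀ σ)]
  obtain ⟨y, hy, hyt⟩ := exists_invariant_pow_eq
    (IsAlgClosed.exists_units_pow_eq (k := ℂ) (Fintype.card_ne_zero (α := W)))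
    (fun σ => ⇑(ρ σ)⁻¹) _ ht₀_inv
  obtain ⟨g, hg⟩ := QuotientGroup.mk_surjective (ψ.symm y)
  refine exists_mem_mul_fixed_of_mk_eq_pow φ Z (g := g) (fun σ => ψ.injective ?_) (ψ.injective ?_)
  · funext s
    rw [hψ, hg, MulEquiv.apply_symm_apply, hy]
  · rw [map_pow, hg, MulEquiv.apply_symm_apply, hyt]

/-- **Cohomological content of Corollary 6.5 of the paper**: let a finite group
`W` act by automorphisms `φ` on a multiplicative abelian group `T`, and let
`Z ≤ T` be a `W`-stable subgroup such that there exist a finite `W`-set `S`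
(action via `ρ : W →* Perm S`) and a `W`-equivariant group isomorphism `ψ` from
`T/Z` onto the permutation module `S → ℂˣ` (where `W` acts on `S → ℂˣ` by
`(σ · f) s = f ((ρ σ)⁻¹ s)`).  If `t₀ ∈ T` satisfies `(σ·t₀)·t₀⁻¹ ∈ Z` for all
`σ ∈ W`, then there exists `z₀ ∈ Z` with `σ·(z₀·t₀) = z₀·t₀` for all `σ ∈ W`. -/
theorem exists_central_modification_fixed
    {W T : Type*} [Group W] [Finite W] [CommGroup T]
    (φ : W →* MulAut T) (Z : Subgroup T)
    (hZstable : ∀ (σ : W), ∀ z ∈ Z, φ σ z ∈ Z)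
    (hperm : ∃ (S : Type) (_ : Fintype S) (ρ : W →* Equiv.Perm S)
        (ψ : (T ⧸ Z) ≃* (S → ℂˣ)),
        ∀ (σ : W) (t : T) (s : S),
          ψ (QuotientGroup.mk (φ σ t)) s = ψ (QuotientGroup.mk t) ((ρ σ)⁻¹ s))
    (t₀ : T) (ht₀ : ∀ σ : W, φ σ t₀ * t₀⁻¹ ∈ Z) :
    ∃ z₀ ∈ Z, ∀ σ : W, φ σ (z₀ * t₀) = z₀ * t₀ :=
  exists_central_modification_fixed_general φ Z hperm t₀ ht₀
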